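/- Let Z = m_1P_1 + ⋯ + m_sP_s be a fat point scheme in ℙⁿ×ℙᵐ and suppose Z is arithmetically Cohen–Macaulay. Then for every fixed point P_i, every set of minimal separators {F_1,…,F_p} of P_i of multiplicity m_i is a good set of minimal separators. -/

import Mathlib

/-!
Formalization of statements from "Separators of fat points in ℙⁿ×ℙᵐ"
(Guardo–Van Tuyl).  The bigraded coordinate ring `R = k[x₀,…,xₙ,y₀,…,y_m]` of
`ℙⁿ×ℙᵐ` is modelled as `MvPolynomial (Fin (n+1) ⊕ Fin (m+1)) k`, where the
variable `X (Sum.inl i)` is `xᵢ` (degree `(1,0)`) and `X (Sum.inr j)` is `yⱼ`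
(degree `(0,1)`); bihomogeneity is weighted homogeneity for the weight `biWeight`.
-/

open MvPolynomial

noncomputable section

/-- The ℕ²-graded coordinate ring `R` of `ℙⁿ×ℙᵐ`. -/
abbrev BiRing (k : Type) [Field k] (n m : ℕ) : Type :=
  MvPolynomial (Fin (n + 1) ⊕ Fin (m + 1)) k

/-- The weight function on the variables giving the ℕ²-grading:
`deg xᵢ = (1,0)` and `deg yⱼ = (0,1)`. -/
def biWeight (n m : ℕ) : Fin (n + 1) ⊕ Fin (m + 1) → ℕ × ℕ :=
  Sum.elim (fun _ => (1, 0)) (fun _ => (0, 1))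

variable {k : Type} [Field k] {n m : ℕ}

/-- `F` is bihomogeneous of degree `d ∈ ℕ²`. -/
def BihomOfDeg (F : BiRing k n m) (d : ℕ × ℕ) : Prop :=
  IsWeightedHomogeneous (biWeight n m) F d

/-- `I` is the defining (prime) ideal of a point of `ℙⁿ×ℙᵐ`: it is generated by
`n` linear forms of degree `(1,0)` and `m` linear forms of degree `(0,1)` which
are linearly independent (so that they cut out a single point of `ℙⁿ×ℙᵐ`). -/
def IsPointIdeal (I : Ideal (BiRing k n m)) : Prop :=
  ∃ (L : Fin n → BiRing k n m) (L' : Fin m → BiRing k n m),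
    (∀ a, BihomOfDeg (L a) (1, 0)) ∧ (∀ b, BihomOfDeg (L' b) (0, 1)) ∧
    LinearIndependent k (Sum.elim L L') ∧
    I = Ideal.span (Set.range L ∪ Set.range L')

/-- The defining ideal `I_Z = I_{P₁}^{m₁} ∩ ⋯ ∩ I_{P_s}^{m_s}` of the fat point
scheme `Z = m₁P₁ + ⋯ + m_sP_s`. -/
def fatIdeal {s : ℕ} (P : Fin s → Ideal (BiRing k n m)) (mult : Fin s → ℕ) :
    Ideal (BiRing k n m) :=
  ⨅ j, P j ^ mult j

/-- `F` is a separator of the point `Pᵢ` of multiplicity `mᵢ`, where `IZ = I_Z`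
and `IZ' = I_{Z'}`: a bihomogeneous form lying in `I_{Z'} \ I_Z`
(equivalently `F ∈ I_{Pᵢ}^{mᵢ-1} \ I_{Pᵢ}^{mᵢ}` and `F ∈ I_{Pⱼ}^{mⱼ}` for `j ≠ i`). -/
def IsSeparator (IZ IZ' : Ideal (BiRing k n m)) (F : BiRing k n m) : Prop :=
  (∃ d, BihomOfDeg F d) ∧ F ∈ IZ' ∧ F ∉ IZ

/-- `F₁,…,F_p` is a set of minimal separators of `Pᵢ` of multiplicity `mᵢ`:
each `Fⱼ` is a (bihomogeneous) separator, their residue classes generate the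
ideal `I_{Z'}/I_Z` of `R/I_Z` (equivalently `I_Z + (F₁,…,F_p) = I_{Z'}`), and no
fewer than `p` bihomogeneous forms have classes generating `I_{Z'}/I_Z`. -/
def IsMinSepSet (IZ IZ' : Ideal (BiRing k n m)) {p : ℕ}
    (F : Fin p → BiRing k n m) : Prop :=
  (∀ j, IsSeparator IZ IZ' (F j)) ∧
  IZ ⊔ Ideal.span (Set.range F) = IZ' ∧
  ∀ q : ℕ, q < p → ∀ G : Fin q → BiRing k n m,
    (∀ j, ∃ d, BihomOfDeg (G j) d) → IZ ⊔ Ideal.span (Set.range G) ≠ IZ'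

/-- A family `F₁,…,F_p` of forms with `deg Fⱼ = d j` is a *good* set (of minimal
separators) if for every `t ∈ ℕ²` the classes of `x₀^{t₁-dⱼ₁} y₀^{t₂-dⱼ₂} Fⱼ`
(over those `j` with `d j ⪯ t` componentwise) are linearly independent in
`(I_{Z'}/I_Z)_t`; i.e. any `k`-linear combination lying in `I_Z` has all its
coefficients equal to zero. -/
def IsGoodSepSet {p : ℕ} (IZ : Ideal (BiRing k n m)) (F : Fin p → BiRing k n m)
    (d : Fin p → ℕ × ℕ) : Prop :=
  ∀ t : ℕ × ℕ, ∀ c : Fin p → k,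
    (∑ j ∈ Finset.univ.filter (fun j => (d j).1 ≤ t.1 ∧ (d j).2 ≤ t.2),
        c j • (X (Sum.inl 0) ^ (t.1 - (d j).1) * X (Sum.inr 0) ^ (t.2 - (d j).2) * F j))
      ∈ IZ →
    ∀ j : Fin p, (d j).1 ≤ t.1 → (d j).2 ≤ t.2 → c j = 0

/-- `f, g` is a regular sequence of length two on `R/I`: the class of `f` is a
nonzero-divisor on `R/I`, the class of `g` is a nonzero-divisor on `R/(I,f)`,
and `R/(I,f,g) ≠ 0`. -/
def IsRegularPair (I : Ideal (BiRing k n m)) (f g : BiRing k n m) : Prop :=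
  (∀ h, f * h ∈ I → h ∈ I) ∧
  (∀ h, g * h ∈ I ⊔ Ideal.span {f} → h ∈ I ⊔ Ideal.span {f}) ∧
  I ⊔ Ideal.span {f, g} ≠ ⊤

/-- The fat point scheme with ideal `I` is arithmetically Cohen–Macaulay (ACM),
i.e. `depth R/I_Z = dim R/I_Z = 2`.  Since `dim R/I_Z = 2` always holds for a
(nonempty) fat point scheme and `depth ≤ dim`, this is equivalent to the
existence of a regular sequence of length two on `R/I_Z` contained in the
irrelevant maximal ideal `(x₀,…,xₙ,y₀,…,y_m)` (= polynomials with zero constant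
term). -/
def IsACM (I : Ideal (BiRing k n m)) : Prop :=
  ∃ f g : BiRing k n m,
    constantCoeff f = 0 ∧ constantCoeff g = 0 ∧ IsRegularPair I f g

/-!
By graded Nakayama, the classes of the `Fⱼ` generate `I_{Z'}/I_Z` minimally only if no `F_{j₀}`
lies in `I_Z + 𝔪 I_{Z'} + (Fⱼ : j ≠ j₀)`, where `𝔪 = (x₀, …, xₙ, y₀, …, y_m)`. Given a
relation `∑ cⱼ x₀^{aⱼ} y₀^{bⱼ} Fⱼ ∈ I_Z` with some `cⱼ ≠ 0`, cancel the least power of `x₀`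
(a nonzero-divisor on `R/I_Z`) and then the least power of `y₀` (a nonzero-divisor on
`R/(I_Z + (x₀))`; `x₀` being a nonzero-divisor on `R/I_{Z'}` keeps the error term inside
`x₀ I_{Z'}`). The terms with a leftover power of `x₀` or `y₀` lie in `(x₀, y₀) I_{Z'}`, so the
terms of least exponents give a nontrivial relation among the `Fⱼ` modulo `I_Z + 𝔪 I_{Z'}`.
-/

section RegularElements

variable {R : Type*} [CommRing R]

theorem mem_of_pow_mul_mem {K I' : Ideal R} {z : R} (hz : ∀ g ∈ I', z * g ∈ K → g ∈ K)
    (N : ℕ) {g : R} (hg : g ∈ I') (h : z ^ N * g ∈ K) : g ∈ K := by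
  induction N generalizing g with
  | zero => simpa using h
  | succ N ih =>
    refine hz g hg (ih (I'.mul_mem_left z hg) ?_)
    rwa [← mul_assoc, ← pow_succ]

theorem exists_sum_mem_sup_span_mul {ι : Type*} {K I' : Ideal R} {z : R}
    (hz : ∀ g ∈ I', z * g ∈ K → g ∈ K) {T : Finset ι} (hT : T.Nonempty) (e : ι → ℕ)
    {G : ι → R} (hG : ∀ j ∈ T, G j ∈ I') (h : ∑ j ∈ T, z ^ e j * G j ∈ K) :
    ∃ T' ⊆ T, T'.Nonempty ∧ ∑ j ∈ T', G j ∈ K ⊔ Ideal.span {z} * I' := by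
  set α := T.inf' hT e
  have hα : ∀ j ∈ T, α ≤ e j := fun j hj => T.inf'_le e hj
  have hS : ∑ j ∈ T, z ^ (e j - α) * G j ∈ K := by
    refine mem_of_pow_mul_mem hz α (I'.sum_mem fun j hj => I'.mul_mem_left _ (hG j hj)) ?_
    rw [Finset.mul_sum]
    convert h using 2 with j hj
    rw [← mul_assoc, ← pow_add, Nat.add_sub_cancel' (hα j hj)]
  have hrest : ∑ j ∈ T with e j ≠ α, z ^ (e j - α) * G j ∈ Ideal.span {z} * I' := by
    refine Ideal.sum_mem _ fun j hj => ?_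
    obtain ⟨hjT, hne⟩ := Finset.mem_filter.mp hj
    obtain ⟨r, hr⟩ : ∃ r, e j - α = r + 1 := ⟨e j - α - 1, by have := hα j hjT; omega⟩
    rw [hr, pow_succ', mul_assoc]
    exact Ideal.mul_mem_mul (Ideal.mem_span_singleton_self z) (I'.mul_mem_left _ (hG j hjT))
  obtain ⟨j₀, hj₀, hj₀α⟩ := Finset.exists_mem_eq_inf' hT e
  refine ⟨T.filter (e · = α), Finset.filter_subset _ _,
    ⟨j₀, Finset.mem_filter.mpr ⟨hj₀, hj₀α.symm⟩⟩, ?_⟩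
  have hsplit : ∑ j ∈ T, z ^ (e j - α) * G j
      = ∑ j ∈ T with e j = α, G j + ∑ j ∈ T with e j ≠ α, z ^ (e j - α) * G j := by
    rw [← Finset.sum_filter_add_sum_filter_not T (e · = α)]
    congr 1
    exact Finset.sum_congr rfl fun j hj => by simp [(Finset.mem_filter.mp hj).2]
  rw [← add_sub_cancel_right (∑ j ∈ T with e j = α, G j)
    (∑ j ∈ T with e j ≠ α, z ^ (e j - α) * G j), ← hsplit]
  exact Ideal.sub_mem _ (Ideal.mem_sup_left hS) (Ideal.mem_sup_right hrest)

theorem mem_sup_span_mul_of_mem_sup_span {I I' : Ideal R} (hII' : I ≤ I') {x g : R}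
    (hx' : ∀ g, x * g ∈ I' → g ∈ I') (hg : g ∈ I') (hgx : g ∈ I ⊔ Ideal.span {x}) :
    g ∈ I ⊔ Ideal.span {x} * I' := by
  obtain ⟨h, hh, _, hr, rfl⟩ := Submodule.mem_sup.mp hgx
  obtain ⟨r, rfl⟩ := Ideal.mem_span_singleton'.mp hr
  have hr : r ∈ I' := hx' r (by
    rw [mul_comm, ← add_sub_cancel_left h (r * x)]
    exact I'.sub_mem hg (hII' hh))
  rw [mul_comm r x]
  exact Ideal.add_mem _ (Ideal.mem_sup_left hh)
    (Ideal.mem_sup_right (Ideal.mul_mem_mul (Ideal.mem_span_singleton_self x) hr))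

theorem exists_sum_mem_sup_span_pair_mul {ι : Type*} {I I' : Ideal R} (hII' : I ≤ I') {x y : R}
    (hx : ∀ g, x * g ∈ I → g ∈ I) (hx' : ∀ g, x * g ∈ I' → g ∈ I')
    (hxy : ∀ g, y * g ∈ I ⊔ Ideal.span {x} → g ∈ I ⊔ Ideal.span {x})
    {T : Finset ι} (hT : T.Nonempty) (a b : ι → ℕ) {G : ι → R} (hG : ∀ j ∈ T, G j ∈ I')
    (h : ∑ j ∈ T, x ^ a j * (y ^ b j * G j) ∈ I) :
    ∃ T' ⊆ T, T'.Nonempty ∧ ∑ j ∈ T', G j ∈ I ⊔ Ideal.span {x, y} * I' := by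
  obtain ⟨T₁, hT₁, hT₁ne, h₁⟩ := exists_sum_mem_sup_span_mul (fun g _ => hx g) hT a
    (fun j hj => I'.mul_mem_left _ (hG j hj)) h
  have hy : ∀ g ∈ I', y * g ∈ I ⊔ Ideal.span {x} * I' → g ∈ I ⊔ Ideal.span {x} * I' :=
    fun g hg hyg => mem_sup_span_mul_of_mem_sup_span hII' hx' hg
      (hxy g (sup_le_sup_left Ideal.mul_le_left I hyg))
  obtain ⟨T₂, hT₂, hT₂ne, h₂⟩ := exists_sum_mem_sup_span_mul hy hT₁ne b
    (fun j hj => hG j (hT₁ hj)) h₁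
  refine ⟨T₂, hT₂.trans hT₁, hT₂ne, ?_⟩
  rwa [sup_assoc, ← Ideal.sup_mul, ← Ideal.span_union, Set.singleton_union] at h₂

theorem mem_sup_span_image_ne_of_sum_smul_mem {k ι : Type*} [Field k] [Algebra k R]
    {K : Ideal R} {T : Finset ι} {c : ι → k} {F : ι → R} (h : ∑ j ∈ T, c j • F j ∈ K)
    {j₀ : ι} (hj₀ : j₀ ∈ T) (hc : c j₀ ≠ 0) :
    F j₀ ∈ K ⊔ Ideal.span (F '' {j | j ≠ j₀}) := by
  classical
  have hothers : ∑ j ∈ T.erase j₀, c j • F j ∈ Ideal.span (F '' {j | j ≠ j₀}) :=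
    Ideal.sum_mem _ fun j hj => Submodule.smul_of_tower_mem _ _
      (Ideal.subset_span ⟨j, Finset.ne_of_mem_erase hj, rfl⟩)
  have hsmul : c j₀ • F j₀ ∈ K ⊔ Ideal.span (F '' {j | j ≠ j₀}) := by
    rw [← add_sub_cancel_right (c j₀ • F j₀) (∑ j ∈ T.erase j₀, c j • F j),
      Finset.add_sum_erase T (fun j => c j • F j) hj₀]
    exact Ideal.sub_mem _ (Ideal.mem_sup_left h) (Ideal.mem_sup_right hothers)
  simpa [smul_smul, inv_mul_cancel₀ hc] using Submodule.smul_of_tower_mem _ (c j₀)⁻¹ hsmul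

end RegularElements

attribute [local instance] MvPolynomial.weightedGradedAlgebra

theorem Ideal.IsHomogeneous.pow {ι σ A : Type*} [DecidableEq ι] [AddMonoid ι] [CommSemiring A]
    [SetLike σ A] [AddSubmonoidClass σ A] {𝒜 : ι → σ} [GradedRing 𝒜] {I : Ideal A}
    (hI : I.IsHomogeneous 𝒜) (e : ℕ) : (I ^ e).IsHomogeneous 𝒜 := by
  induction e with
  | zero => simpa only [pow_zero, Ideal.one_eq_top] using Ideal.IsHomogeneous.top 𝒜
  | succ e ih => simpa only [pow_succ] using ih.mul hI

section GradedNakayama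

variable {σ R : Type*} [Fintype σ] [CommRing R] {w : σ → ℕ × ℕ}

theorem degree_le_weight_fst_add_snd (hw : ∀ v, w v ≠ 0) (μ : σ →₀ ℕ) :
    μ.degree ≤ (Finsupp.weight w μ).1 + (Finsupp.weight w μ).2 := by
  rw [Finsupp.weight_eq_sum, Finsupp.degree_eq_sum, Prod.fst_sum, Prod.snd_sum,
    ← Finset.sum_add_distrib]
  refine Finset.sum_le_sum fun v _ => ?_
  have : 1 ≤ (w v).1 + (w v).2 := by
    have := hw v
    rw [Ne, Prod.ext_iff] at this
    simp only [Prod.fst_zero, Prod.snd_zero] at this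
    omega
  simpa [mul_add] using Nat.mul_le_mul_left (μ v) this

theorem weightedHomogeneousComponent_eq_zero_of_mem_pow_idealOfVars (hw : ∀ v, w v ≠ 0)
    {N : ℕ} {f : MvPolynomial σ R} (hf : f ∈ idealOfVars σ R ^ N) {t : ℕ × ℕ}
    (ht : t.1 + t.2 < N) : weightedHomogeneousComponent w t f = 0 := by
  refine weightedHomogeneousComponent_eq_zero' t f fun μ hμ hμt => ?_
  have := degree_le_weight_fst_add_snd hw μ
  have := (mem_pow_idealOfVars_iff N f).mp hf μ hμ
  rw [hμt] at *
  omega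

theorem le_of_le_sup_idealOfVars_mul (hw : ∀ v, w v ≠ 0) {I J : Ideal (MvPolynomial σ R)}
    (hJ : J.IsHomogeneous (weightedHomogeneousSubmodule R w))
    (h : I ≤ J ⊔ idealOfVars σ R * I) : I ≤ J := by
  have hpow : ∀ N : ℕ, I ≤ J ⊔ idealOfVars σ R ^ N * I := by
    intro N
    induction N with
    | zero => simp
    | succ N ih =>
      refine ih.trans (sup_le le_sup_left ?_)
      calc idealOfVars σ R ^ N * I
          ≤ idealOfVars σ R ^ N * (J ⊔ idealOfVars σ R * I) := Ideal.mul_mono_right h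
        _ = idealOfVars σ R ^ N * J ⊔ idealOfVars σ R ^ (N + 1) * I := by
          rw [Ideal.mul_sup, pow_succ, mul_assoc]
        _ ≤ J ⊔ idealOfVars σ R ^ (N + 1) * I := sup_le_sup_right Ideal.mul_le_right _
  intro f hf
  refine (mem_iff_weightedHomogeneousComponent_mem R w hJ f).mpr fun t => ?_
  obtain ⟨a, ha, b, hb, rfl⟩ := Submodule.mem_sup.mp (hpow (t.1 + t.2 + 1) hf)
  rw [map_add, weightedHomogeneousComponent_eq_zero_of_mem_pow_idealOfVars hw
    (Ideal.mul_le_left hb) (Nat.lt_succ_self _), add_zero]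
  exact weightedHomogeneousComponent_mem_of_mem R w hJ ha t

theorem sup_span_image_ne_eq_of_mem_sup_idealOfVars_mul {ι : Type*} (hw : ∀ v, w v ≠ 0)
    {I I' : Ideal (MvPolynomial σ R)} (hI : I.IsHomogeneous (weightedHomogeneousSubmodule R w))
    {F : ι → MvPolynomial σ R} (hF : ∀ j, ∃ d, IsWeightedHomogeneous w (F j) d)
    (hgen : I ⊔ Ideal.span (Set.range F) = I') {j₀ : ι}
    (hj₀ : F j₀ ∈ I ⊔ idealOfVars σ R * I' ⊔ Ideal.span (F '' {j | j ≠ j₀})) :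
    I ⊔ Ideal.span (F '' {j | j ≠ j₀}) = I' := by
  set J := I ⊔ Ideal.span (F '' {j | j ≠ j₀})
  have hJ : J.IsHomogeneous (weightedHomogeneousSubmodule R w) := by
    refine hI.sup (Ideal.homogeneous_span _ _ ?_)
    rintro _ ⟨j, -, rfl⟩
    obtain ⟨d, hd⟩ := hF j
    exact ⟨d, hd⟩
  have hJI' : J ≤ I' := by
    rw [← hgen]
    exact sup_le_sup_left (Ideal.span_mono (Set.image_subset_range _ _)) I
  refine le_antisymm hJI' (le_of_le_sup_idealOfVars_mul hw hJ ?_)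
  conv_lhs => rw [← hgen]
  refine sup_le (le_sup_left.trans le_sup_left) (Ideal.span_le.mpr ?_)
  rintro _ ⟨j, rfl⟩
  by_cases hj : j = j₀
  · rwa [hj, ← sup_right_comm]
  · exact Ideal.mem_sup_left (Ideal.mem_sup_right (Ideal.subset_span ⟨j, hj, rfl⟩))

end GradedNakayama

theorem biWeight_ne_zero (v : Fin (n + 1) ⊕ Fin (m + 1)) : biWeight n m v ≠ 0 := by
  cases v <;> simp [biWeight]

theorem IsPointIdeal.isHomogeneous {I : Ideal (BiRing k n m)} (hI : IsPointIdeal I) :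
    I.IsHomogeneous (weightedHomogeneousSubmodule k (biWeight n m)) := by
  obtain ⟨L, L', hL, hL', -, rfl⟩ := hI
  refine Ideal.homogeneous_span _ _ ?_
  rintro _ (⟨a, rfl⟩ | ⟨b, rfl⟩)
  · exact ⟨(1, 0), hL a⟩
  · exact ⟨(0, 1), hL' b⟩

theorem isHomogeneous_fatIdeal {s : ℕ} {P : Fin s → Ideal (BiRing k n m)}
    (hP : ∀ j, IsPointIdeal (P j)) (mult : Fin s → ℕ) :
    (fatIdeal P mult).IsHomogeneous (weightedHomogeneousSubmodule k (biWeight n m)) :=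
  Ideal.IsHomogeneous.iInf fun j => (hP j).isHomogeneous.pow (mult j)

theorem IsMinSepSet.notMem_sup_idealOfVars_mul_sup {IZ IZ' : Ideal (BiRing k n m)} {p : ℕ}
    {F : Fin p → BiRing k n m} (hmin : IsMinSepSet IZ IZ' F)
    (hIZ : IZ.IsHomogeneous (weightedHomogeneousSubmodule k (biWeight n m))) (j₀ : Fin p) :
    F j₀ ∉ IZ ⊔ idealOfVars _ k * IZ' ⊔ Ideal.span (F '' {j | j ≠ j₀}) := by
  obtain ⟨hsep, hgen, hfewer⟩ := hmin
  cases p with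
  | zero => exact j₀.elim0
  | succ p =>
    intro hj₀
    have hrange : Set.range (F ∘ j₀.succAbove) = F '' {j | j ≠ j₀} := by
      rw [Set.range_comp, Fin.range_succAbove]
      rfl
    refine hfewer p p.lt_succ_self (F ∘ j₀.succAbove) (fun j => (hsep _).1) ?_
    rw [hrange]
    exact sup_span_image_ne_eq_of_mem_sup_idealOfVars_mul biWeight_ne_zero hIZ
      (fun j => (hsep j).1) hgen hj₀

theorem stmt9_general {s : ℕ}
    (P : Fin s → Ideal (BiRing k n m)) (mult : Fin s → ℕ)
    (hP : ∀ j, IsPointIdeal (P j))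
    (IZ IZ' : Ideal (BiRing k n m))
    (hIZ : IZ = fatIdeal P mult)
    (hx : ∀ g : BiRing k n m, X (Sum.inl 0) * g ∈ IZ → g ∈ IZ)
    (hx' : ∀ g : BiRing k n m, X (Sum.inl 0) * g ∈ IZ' → g ∈ IZ')
    (hxy : ∀ g : BiRing k n m,
      X (Sum.inr 0) * g ∈ IZ ⊔ Ideal.span {X (Sum.inl 0)} →
        g ∈ IZ ⊔ Ideal.span {X (Sum.inl 0)})
    {p : ℕ} (F : Fin p → BiRing k n m) (d : Fin p → ℕ × ℕ)
    (hmin : IsMinSepSet IZ IZ' F) :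
    IsGoodSepSet IZ F d := by
  classical
  intro t c hsum j hj₁ hj₂
  by_contra hc
  have hIZ_le : IZ ≤ IZ' := hmin.2.1 ▸ le_sup_left
  have hrel :
      ∑ i ∈ (Finset.univ.filter fun i => (d i).1 ≤ t.1 ∧ (d i).2 ≤ t.2).filter (c · ≠ 0),
        X (Sum.inl 0) ^ (t.1 - (d i).1) * (X (Sum.inr 0) ^ (t.2 - (d i).2) * c i • F i)
      ∈ IZ := by
    convert hsum using 1
    rw [Finset.sum_filter_of_ne (p := (c · ≠ 0)) fun i _ => mt fun hci => by simp [hci]]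
    exact Finset.sum_congr rfl fun i _ => by rw [mul_smul_comm, mul_smul_comm, mul_assoc]
  obtain ⟨T, hT, ⟨j₀, hj₀⟩, hTmem⟩ := exists_sum_mem_sup_span_pair_mul hIZ_le hx hx' hxy
    ⟨j, by simp [hj₁, hj₂, hc]⟩ _ _
    (fun i _ => Submodule.smul_of_tower_mem _ _ (hmin.1 i).2.1) hrel
  have hvars : Ideal.span {(X (Sum.inl 0) : BiRing k n m), X (Sum.inr 0)} ≤ idealOfVars _ k :=
    Ideal.span_mono (Set.insert_subset (Set.mem_range_self _)
      (Set.singleton_subset_iff.mpr (Set.mem_range_self _)))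
  refine hmin.notMem_sup_idealOfVars_mul_sup (hIZ ▸ isHomogeneous_fatIdeal hP mult) j₀ ?_
  refine sup_le_sup_right (sup_le_sup_left (Ideal.mul_mono_left hvars) IZ) _ ?_
  exact mem_sup_span_image_ne_of_sum_smul_mem hTmem hj₀ (Finset.mem_filter.mp (hT hj₀)).2

/-- Theorem 5.1, the first main theorem: if the fat point
scheme `Z ⊆ ℙⁿ×ℙᵐ` is ACM (with coordinates chosen so that `x₀, y₀` is a regular
sequence on `R/I_Z` and `x₀, y₀` are nonzero-divisors on `R/I_{Z'}`), then every
set of minimal separators of the point `Pᵢ` of multiplicity `mᵢ` is a good set of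
minimal separators. -/
theorem stmt9 [IsAlgClosed k] [CharZero k] {s : ℕ}
    (P : Fin s → Ideal (BiRing k n m)) (mult : Fin s → ℕ)
    (hP : ∀ j, IsPointIdeal (P j)) (hinj : Function.Injective P)
    (hmult : ∀ j, 1 ≤ mult j) (i : Fin s)
    (IZ IZ' : Ideal (BiRing k n m))
    (hIZ : IZ = fatIdeal P mult)
    (hIZ' : IZ' = fatIdeal P (Function.update mult i (mult i - 1)))
    (hx : ∀ g : BiRing k n m, X (Sum.inl 0) * g ∈ IZ → g ∈ IZ)
    (hy : ∀ g : BiRing k n m, X (Sum.inr 0) * g ∈ IZ → g ∈ IZ)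
    (hx' : ∀ g : BiRing k n m, X (Sum.inl 0) * g ∈ IZ' → g ∈ IZ')
    (hy' : ∀ g : BiRing k n m, X (Sum.inr 0) * g ∈ IZ' → g ∈ IZ')
    (hxy : ∀ g : BiRing k n m,
      X (Sum.inr 0) * g ∈ IZ ⊔ Ideal.span {X (Sum.inl 0)} →
        g ∈ IZ ⊔ Ideal.span {X (Sum.inl 0)})
    (hACM : IsACM IZ)
    {p : ℕ} (F : Fin p → BiRing k n m) (d : Fin p → ℕ × ℕ)
    (hdeg : ∀ j, BihomOfDeg (F j) (d j))
    (hmin : IsMinSepSet IZ IZ' F) :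
    IsGoodSepSet IZ F d :=
  stmt9_general P mult hP IZ IZ' hIZ hx hx' hxy F d hmin
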